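/- arXiv:1811.04625 — 2 statements merged into one kernel-verified Lean document; each statement's English description precedes it below -/
import Mathlib

section
/- Let n, t ≥ 1 and let F₁, …, F_t be t mutually orthogonal Latin squares of order n indexed by [n] = {0, 1, …, n−1}. Then for each k with 1 ≤ k ≤ t, the array 𝒳_k defined on the index set [n] × [n] by 𝒳_k((p,r),(q,c)) = (F_k(F₁(p,r), q), F_k(F₁(p,q), c)) is a Latin square of order n². -/
/-!
Every row and every column of `𝒳_k` is a shear `(x, y) ↦ (f x, g x y)` of bijections, hence a
bijection. In the row `(p, r)`, the first symbol `F_k(F₁(p,r), q)` is a bijective function of `q`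
alone, and once `q` is fixed the second symbol is a bijective function of `c`. In the column
`(q, c)` the roles swap: the second symbol `F_k(F₁(p,q), c)` is a bijective function of `p` alone
(a column of `F₁` followed by a column of `F_k`), and once `p` is fixed the first symbol is a
bijective function of `r`.
-/

/-- A Latin square on an index/symbol set `α`: every row and every column is a bijection. -/
def IsLatinSquare {α : Type*} (L : α → α → α) : Prop :=
  (∀ r, Function.Bijective (fun c => L r c)) ∧
  (∀ c, Function.Bijective (fun r => L r c))

/-- Two Latin squares (as arrays) are orthogonal if superimposing them gives a bijection. -/
def IsOrthogonal {α : Type*} (L₁ L₂ : α → α → α) : Prop :=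
  Function.Bijective (fun rc : α × α => (L₁ rc.1 rc.2, L₂ rc.1 rc.2))

theorem Function.Bijective.prodShear {α β γ δ : Type*} {f : α → β} {g : α → γ → δ}
    (hf : f.Bijective) (hg : ∀ a, (g a).Bijective) :
    Function.Bijective (fun x : α × γ => (f x.1, g x.1 x.2)) :=
  (Equiv.prodShear (Equiv.ofBijective f hf) fun a => Equiv.ofBijective (g a) (hg a)).bijective

def latinProduct {α : Type*} (A B : α → α → α) : α × α → α × α → α × α :=
  fun pr qc => (A (B pr.1 pr.2) qc.1, A (B pr.1 qc.1) qc.2)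

namespace IsLatinSquare

variable {α : Type*} {A B : α → α → α}

theorem latinProduct (hA : IsLatinSquare A) (hB : IsLatinSquare B) :
    IsLatinSquare (latinProduct A B) := by
  refine ⟨fun pr => ?_, fun qc => ?_⟩
  · exact (hA.1 _).prodShear fun q => hA.1 _
  · have hcol : Function.Bijective fun p => A (B p qc.1) qc.2 := (hA.2 qc.2).comp (hB.2 qc.1)
    have hshear := hcol.prodShear fun p => (hA.2 qc.1).comp (hB.1 p)
    exact Prod.swap_bijective.comp hshear

end IsLatinSquare

theorem stmt_2_general (n t : ℕ) (ht : 1 ≤ t)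
    (F : Fin t → Fin n → Fin n → Fin n)
    (hF : ∀ k, IsLatinSquare (F k))
    (X : Fin t → (Fin n × Fin n) → (Fin n × Fin n) → (Fin n × Fin n))
    (hX : ∀ k pr qc, X k pr qc =
      (F k (F ⟨0, ht⟩ pr.1 pr.2) qc.1, F k (F ⟨0, ht⟩ pr.1 qc.1) qc.2)) :
    ∀ k, IsLatinSquare (X k) := by
  intro k
  have hXk : X k = latinProduct (F k) (F ⟨0, ht⟩) := by
    funext pr qc
    exact hX k pr qc
  exact hXk ▸ (hF k).latinProduct (hF ⟨0, ht⟩)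

/-- Each array `𝒳_k((p,r),(q,c)) = (F_k(F₁(p,r),q), F_k(F₁(p,q),c))` is a Latin square
of order `n²`. -/
theorem stmt_2 (n t : ℕ) (hn : 1 ≤ n) (ht : 1 ≤ t)
    (F : Fin t → Fin n → Fin n → Fin n)
    (hF : ∀ k, IsLatinSquare (F k))
    (hForth : ∀ k l, k ≠ l → IsOrthogonal (F k) (F l))
    (X : Fin t → (Fin n × Fin n) → (Fin n × Fin n) → (Fin n × Fin n))
    (hX : ∀ k pr qc, X k pr qc =
      (F k (F ⟨0, ht⟩ pr.1 pr.2) qc.1, F k (F ⟨0, ht⟩ pr.1 qc.1) qc.2)) :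
    ∀ k, IsLatinSquare (X k) :=
  stmt_2_general n t ht F hF X hX
end

section
/- Let n ≥ 1, let A₁ be a Latin square of order n, let B₁, B₂ be a pair of orthogonal Latin squares of order n, and let C_α, C_β be Latin squares of order n, all indexed by [n] = {0, 1, …, n−1}. Define the arrays ℬ₁((p,r),(q,c)) = (A₁(p,q), B₁(r,c)) and 𝒳_{α,β}((p,r),(q,c)) = (C_α(p, B₁(r,c)), C_β(q, B₂(r,c))) on the index set [n] × [n]. Then the Latin squares ℬ₁ and 𝒳_{α,β} of order n² are orthogonal. -/
/-!
From a cell's pair of symbols `((A₁(p,q), B₁(r,c)), (C_α(p,B₁(r,c)), C_β(q,B₂(r,c))))` one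
recovers the cell: knowing `B₁(r,c)`, the column `B₁(r,c)` of `C_α` gives `p`; row `p` of `A₁`
gives `q`; row `q` of `C_β` gives `B₂(r,c)`; and orthogonality of `B₁, B₂` gives `(r,c)`.
Over a finite index set this injectivity is bijectivity.
-/

open Function

variable {α : Type*}

theorem IsLatinSquare.injective_row {L : α → α → α} (h : IsLatinSquare L) (r : α) :
    Injective (L r) :=
  (h.1 r).1

theorem IsLatinSquare.injective_col {L : α → α → α} (h : IsLatinSquare L) (c : α) :
    Injective (fun r => L r c) :=
  (h.2 c).1

theorem IsOrthogonal.eq_of_eq {L₁ L₂ : α → α → α} (h : IsOrthogonal L₁ L₂) {r c r' c' : α}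
    (h₁ : L₁ r c = L₁ r' c') (h₂ : L₂ r c = L₂ r' c') : r = r' ∧ c = c' :=
  Prod.ext_iff.mp (h.1 (a₁ := (r, c)) (a₂ := (r', c')) (Prod.ext h₁ h₂))

theorem isOrthogonal_of_injective [Finite α] {L₁ L₂ : α → α → α}
    (h : Injective (fun rc : α × α => (L₁ rc.1 rc.2, L₂ rc.1 rc.2))) : IsOrthogonal L₁ L₂ :=
  Finite.injective_iff_bijective.mp h

def productSquare (A B : α → α → α) : α × α → α × α → α × α :=
  fun pr qc => (A pr.1 qc.1, B pr.2 qc.2)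

def twistedSquare (Cα Cβ B₁ B₂ : α → α → α) : α × α → α × α → α × α :=
  fun pr qc => (Cα pr.1 (B₁ pr.2 qc.2), Cβ qc.1 (B₂ pr.2 qc.2))

theorem isOrthogonal_productSquare_twistedSquare [Finite α] {A₁ B₁ B₂ Cα Cβ : α → α → α}
    (hA₁ : IsLatinSquare A₁) (hB : IsOrthogonal B₁ B₂)
    (hCα : IsLatinSquare Cα) (hCβ : IsLatinSquare Cβ) :
    IsOrthogonal (productSquare A₁ B₁) (twistedSquare Cα Cβ B₁ B₂) := by
  apply isOrthogonal_of_injective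
  rintro ⟨⟨p, r⟩, ⟨q, c⟩⟩ ⟨⟨p', r'⟩, ⟨q', c'⟩⟩ h
  simp only [productSquare, twistedSquare, Prod.mk.injEq] at h
  obtain ⟨⟨hA, hB₁⟩, hCα_eq, hCβ_eq⟩ := h
  rw [hB₁] at hCα_eq
  obtain rfl : p = p' := hCα.injective_col _ hCα_eq
  obtain rfl : q = q' := hA₁.injective_row p hA
  have hB₂ : B₂ r c = B₂ r' c' := hCβ.injective_row q hCβ_eq
  obtain ⟨rfl, rfl⟩ := hB.eq_of_eq hB₁ hB₂
  rfl

theorem stmt_11_general (n : ℕ)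
    (A₁ : Fin n → Fin n → Fin n) (hA₁ : IsLatinSquare A₁)
    (B₁ B₂ : Fin n → Fin n → Fin n)
    (hB : IsOrthogonal B₁ B₂)
    (Cα Cβ : Fin n → Fin n → Fin n)
    (hCα : IsLatinSquare Cα) (hCβ : IsLatinSquare Cβ)
    (calB₁ : (Fin n × Fin n) → (Fin n × Fin n) → (Fin n × Fin n))
    (hcalB₁ : ∀ pr qc, calB₁ pr qc = (A₁ pr.1 qc.1, B₁ pr.2 qc.2))
    (Xαβ : (Fin n × Fin n) → (Fin n × Fin n) → (Fin n × Fin n))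
    (hXαβ : ∀ pr qc, Xαβ pr qc =
      (Cα pr.1 (B₁ pr.2 qc.2), Cβ qc.1 (B₂ pr.2 qc.2))) :
    IsOrthogonal calB₁ Xαβ := by
  obtain rfl : calB₁ = productSquare A₁ B₁ := funext₂ hcalB₁
  obtain rfl : Xαβ = twistedSquare Cα Cβ B₁ B₂ := funext₂ hXαβ
  exact isOrthogonal_productSquare_twistedSquare hA₁ hB hCα hCβ

/-- The Latin squares `ℬ₁((p,r),(q,c)) = (A₁(p,q), B₁(r,c))` and
`𝒳_{α,β}((p,r),(q,c)) = (C_α(p,B₁(r,c)), C_β(q,B₂(r,c)))` of order `n²` are orthogonal. -/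
theorem stmt_11 (n : ℕ) (hn : 1 ≤ n)
    (A₁ : Fin n → Fin n → Fin n) (hA₁ : IsLatinSquare A₁)
    (B₁ B₂ : Fin n → Fin n → Fin n)
    (hB₁ : IsLatinSquare B₁) (hB₂ : IsLatinSquare B₂) (hB : IsOrthogonal B₁ B₂)
    (Cα Cβ : Fin n → Fin n → Fin n)
    (hCα : IsLatinSquare Cα) (hCβ : IsLatinSquare Cβ)
    (calB₁ : (Fin n × Fin n) → (Fin n × Fin n) → (Fin n × Fin n))
    (hcalB₁ : ∀ pr qc, calB₁ pr qc = (A₁ pr.1 qc.1, B₁ pr.2 qc.2))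
    (Xαβ : (Fin n × Fin n) → (Fin n × Fin n) → (Fin n × Fin n))
    (hXαβ : ∀ pr qc, Xαβ pr qc =
      (Cα pr.1 (B₁ pr.2 qc.2), Cβ qc.1 (B₂ pr.2 qc.2))) :
    IsOrthogonal calB₁ Xαβ :=
  stmt_11_general n A₁ hA₁ B₁ B₂ hB Cα Cβ hCα hCβ calB₁ hcalB₁ Xαβ hXαβ
end
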